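/- arXiv:2605.30535 — 2 statements merged into one kernel-verified Lean document; each statement's English description precedes it below -/
import Mathlib

section
/- Let p, q be distinct prime numbers and let G = ⟨a, s, t | sas⁻¹ = aᵖ, tat⁻¹ = a^q⟩. Then the centraliser of s in G is the cyclic subgroup generated by s, and the centraliser of t in G is the cyclic subgroup generated by t. -/
/-!
`G` is the amalgamated product of its subgroups `⟨a, s⟩` and `⟨a, t⟩` over `⟨a⟩`; all we use is
that `G` embeds in that amalgam, the embedding being split by the evident map back.

In an amalgam, if no conjugate of `u ∈ Gᵢ` by an element of `Gᵢ` lies in the amalgamated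
subgroup, then every element conjugating `u` into `Gᵢ` lies in `Gᵢ`: strip letters of `Gᵢ` off
both ends of a reduced word `w`; if some letter remains, `w u w⁻¹` is a reduced word that cannot
lie in `Gᵢ`. Counting exponents of `s` and `t` shows that no conjugate of `s` lies in `⟨a⟩`, so
the centraliser of `s` lies in `⟨a, s⟩`. Every element there is `s⁻ⁱ aᵏ sʲ`, and commuting with `s`
forces `aᵏ = s aᵏ s⁻¹ = a^(pk)`, hence `k = 0` because `a` has infinite order (it acts on `ℚ`
by `x ↦ x + 1`, with `s`, `t` acting by `x ↦ p x`, `x ↦ q x`).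
-/

/-- Generators of the generalised Baumslag–Solitar group
`G = ⟨a, s, t | s a s⁻¹ = aᵖ, t a t⁻¹ = a^q⟩`. -/
inductive Gen
  | a | s | t

/-- Defining relators of `G = ⟨a, s, t | s a s⁻¹ = aᵖ, t a t⁻¹ = a^q⟩`. -/
def gbsRels (p q : ℕ) : Set (FreeGroup Gen) :=
  { FreeGroup.of Gen.s * FreeGroup.of Gen.a * (FreeGroup.of Gen.s)⁻¹ *
      ((FreeGroup.of Gen.a) ^ p)⁻¹,
    FreeGroup.of Gen.t * FreeGroup.of Gen.a * (FreeGroup.of Gen.t)⁻¹ *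
      ((FreeGroup.of Gen.a) ^ q)⁻¹ }

open Function

namespace Monoid.PushoutI

open CoprodI

variable {ι : Type*} {G : ι → Type*} [∀ i, Group (G i)] {H : Type*} [Group H]
  {φ : ∀ i, H →* G i}

theorem NormalWord.Transversal.eq_one_of_mem_range (d : NormalWord.Transversal φ) {i : ι}
    {g : G i} (hg : g ∈ d.set i) (hφg : g ∈ (φ i).range) : g = 1 := by
  rw [← ((d.compl i).equiv_snd_eq_self_iff_mem (φ i).range.one_mem).2 hg]
  exact ((d.compl i).coe_equiv_snd_eq_one_iff_mem (d.one_mem i)).2 hφg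

variable (φ) in
def prodList (L : List (Σ i, G i)) : PushoutI φ :=
  (L.map fun l => of l.1 l.2).prod

@[simp] theorem prodList_nil : prodList φ [] = 1 := rfl

@[simp] theorem prodList_cons (l : Σ i, G i) (L : List (Σ i, G i)) :
    prodList φ (l :: L) = of l.1 l.2 * prodList φ L := by
  simp [prodList]

@[simp] theorem prodList_append (L L' : List (Σ i, G i)) :
    prodList φ (L ++ L') = prodList φ L * prodList φ L' := by
  simp [prodList]

theorem ofCoprodI_word_prod (w : Word G) : ofCoprodI (φ := φ) w.prod = prodList φ w.toList := by
  simp [Word.prod, prodList, map_list_prod, comp_def]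

theorem reduced_neWord_append {i j k l : ι} {w₁ : NeWord G i j} {hne : j ≠ k}
    {w₂ : NeWord G k l} :
    Reduced φ (w₁.append hne w₂).toWord ↔ Reduced φ w₁.toWord ∧ Reduced φ w₂.toWord := by
  simp only [Reduced, NeWord.toWord, NeWord.toList, List.mem_append, or_imp, forall_and]

theorem reduced_neWord_singleton {i : ι} {x : G i} {hx : x ≠ 1} :
    Reduced φ (NeWord.singleton x hx).toWord ↔ x ∉ (φ i).range := by
  simp [Reduced, NeWord.toWord, NeWord.toList]

theorem Reduced.neWord_inv {i j : ι} {w : NeWord G i j} (hw : Reduced φ w.toWord) :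
    Reduced φ w.inv.toWord := by
  induction w with
  | singleton x hx =>
    rw [NeWord.inv, reduced_neWord_singleton, inv_mem_iff]
    exact reduced_neWord_singleton.1 hw
  | append w₁ hne w₂ ih₁ ih₂ =>
    rw [reduced_neWord_append] at hw
    rw [NeWord.inv, reduced_neWord_append]
    exact ⟨ih₂ hw.2, ih₁ hw.1⟩

theorem Reduced.neWord_prod_notMem_base_range (hφ : ∀ i, Injective (φ i)) {i j : ι}
    {w : NeWord G i j} (hw : Reduced φ w.toWord) :
    ofCoprodI w.prod ∉ (base φ).range := fun h =>
  w.toList_ne_nil (congrArg Word.toList (hw.eq_empty_of_mem_range hφ h))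

theorem Reduced.neWord_prod_notMem_of_range (hφ : ∀ i, Injective (φ i)) {i j k : ι}
    {w : NeWord G j k} (hw : Reduced φ w.toWord) (hk : k ≠ i) :
    ofCoprodI w.prod ∉ (of (φ := φ) i).range := by
  rintro ⟨v, hv⟩
  by_cases hvφ : v ∈ (φ i).range
  · obtain ⟨h, rfl⟩ := hvφ
    exact hw.neWord_prod_notMem_base_range hφ ⟨h, by rw [← hv, of_apply_eq_base]⟩
  · have hv1 : v⁻¹ ≠ 1 := fun h => hvφ (by simp [inv_eq_one.1 h])
    have hw' : Reduced φ (w.append hk (.singleton v⁻¹ hv1)).toWord :=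
      reduced_neWord_append.2 ⟨hw, reduced_neWord_singleton.2 (by rwa [inv_mem_iff])⟩
    refine hw'.neWord_prod_notMem_base_range hφ ⟨1, ?_⟩
    rw [NeWord.append_prod, NeWord.prod_singleton, map_mul, ofCoprodI_of, ← hv, map_inv,
      mul_inv_cancel, map_one]

theorem Reduced.conj_neWord_prod_notMem_of_range (hφ : ∀ i, Injective (φ i)) {i j k : ι}
    {w : NeWord G j k} (hw : Reduced φ w.toWord) (hj : j ≠ i) (hk : k ≠ i) {u : G i}
    (hu : u ∉ (φ i).range) :
    ofCoprodI w.prod * of i u * (ofCoprodI w.prod)⁻¹ ∉ (of (φ := φ) i).range := by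
  have hu1 : u ≠ 1 := fun h => hu (h ▸ one_mem _)
  let W := (w.append hk (.singleton u hu1)).append hk.symm w.inv
  have hW : Reduced φ W.toWord :=
    reduced_neWord_append.2 ⟨reduced_neWord_append.2 ⟨hw, reduced_neWord_singleton.2 hu⟩,
      hw.neWord_inv⟩
  have := hW.neWord_prod_notMem_of_range hφ hj
  rwa [NeWord.append_prod, NeWord.append_prod, NeWord.prod_singleton, NeWord.inv_prod,
    map_mul, map_mul, ofCoprodI_of, map_inv] at this

theorem conj_prodList_notMem_of_range (hφ : ∀ i, Injective (φ i)) {i : ι}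
    {L : List (Σ j, G j)} (hL : L ≠ []) (hc : L.IsChain fun l l' => l.1 ≠ l'.1)
    (hr : ∀ l ∈ L, l.2 ∉ (φ l.1).range) (hhead : (L.head hL).1 ≠ i)
    (hlast : (L.getLast hL).1 ≠ i) {u : G i} (hu : u ∉ (φ i).range) :
    prodList φ L * of i u * (prodList φ L)⁻¹ ∉ (of (φ := φ) i).range := by
  let w : Word G := ⟨L, fun l hl h1 => hr l hl (h1 ▸ one_mem _), hc⟩
  obtain ⟨j, k, v, hv⟩ := NeWord.of_word w fun h => hL (congrArg Word.toList h)
  have hvL : v.toList = L := congrArg Word.toList hv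
  have hj : (L.head hL).1 = j := by
    simpa [hvL, List.head?_eq_some_head hL] using congrArg (Option.map Sigma.fst) v.toList_head?
  have hk : (L.getLast hL).1 = k := by
    simpa [hvL, List.getLast?_eq_some_getLast hL] using
      congrArg (Option.map Sigma.fst) v.toList_getLast?
  have := (hv ▸ hr : Reduced φ v.toWord).conj_neWord_prod_notMem_of_range hφ (hj ▸ hhead)
    (hk ▸ hlast) hu
  rwa [NeWord.prod, hv, ofCoprodI_word_prod] at this

theorem prodList_mem_of_range_of_conj_mem (hφ : ∀ i, Injective (φ i)) {i : ι}
    (L : List (Σ j, G j)) (hc : L.IsChain fun l l' => l.1 ≠ l'.1)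
    (hr : ∀ l ∈ L, l.2 ∉ (φ l.1).range) (u : G i) (hu : ∀ x, x * u * x⁻¹ ∉ (φ i).range)
    (h : prodList φ L * of i u * (prodList φ L)⁻¹ ∈ (of (φ := φ) i).range) :
    prodList φ L ∈ (of (φ := φ) i).range := by
  rcases hL : L with _ | ⟨x, L'⟩
  · exact one_mem _
  rw [hL] at hc hr h
  by_cases hx : x.1 = i
  · obtain ⟨j, y⟩ := x
    obtain rfl : j = i := hx
    have hy : of (φ := φ) j y ∈ (of (φ := φ) j).range := ⟨y, rfl⟩
    rw [prodList_cons] at h ⊢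
    refine mul_mem hy (prodList_mem_of_range_of_conj_mem hφ L' hc.tail
      (fun l hl => hr l (.tail _ hl)) u hu ?_)
    convert mul_mem (mul_mem (inv_mem hy) h) hy using 1
    group
  obtain ⟨M, z, hM⟩ := List.eq_nil_or_concat (x :: L') |>.resolve_left (List.cons_ne_nil _ _)
  rw [List.concat_eq_append] at hM
  by_cases hz : z.1 = i
  · obtain ⟨j, y⟩ := z
    obtain rfl : j = i := hz
    rw [hM, prodList_append, prodList_cons, prodList_nil, mul_one] at h ⊢
    rw [hM] at hc hr
    refine mul_mem (prodList_mem_of_range_of_conj_mem hφ M (List.isChain_append.1 hc).1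
      (fun l hl => hr l (List.mem_append_left _ hl)) (y * u * y⁻¹) (fun x => ?_) ?_)
      ⟨y, rfl⟩
    · simpa only [mul_assoc, mul_inv_rev] using hu (x * y)
    · convert h using 1
      simp only [map_mul, map_inv]
      group
  exact absurd h <| conj_prodList_notMem_of_range hφ (List.cons_ne_nil x L') hc hr hx
    (by simpa [hM] using hz) (by simpa using hu 1)
termination_by L.length
decreasing_by
  · simp [hL]
  · simp [hL, ← List.length_cons, hM]

theorem mem_of_range_of_conj_mem (hφ : ∀ i, Injective (φ i)) {i : ι} {u : G i}
    (hu : ∀ x, x * u * x⁻¹ ∉ (φ i).range) {g : PushoutI φ}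
    (hg : g * of i u * g⁻¹ ∈ (of (φ := φ) i).range) : g ∈ (of (φ := φ) i).range := by
  classical
  obtain ⟨d⟩ := NormalWord.transversal_nonempty φ hφ
  let w : NormalWord d := g • NormalWord.empty
  have hb : base φ w.head ∈ (of (φ := φ) i).range := ⟨φ i w.head, of_apply_eq_base φ i _⟩
  have hgw : g = base φ w.head * prodList φ w.toList := by
    rw [← ofCoprodI_word_prod, ← NormalWord.prod, NormalWord.prod_smul, NormalWord.prod_empty,
      mul_one]
  have hred : ∀ l ∈ w.toList, l.2 ∉ (φ l.1).range := fun l hl hφl =>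
    w.ne_one l hl (d.eq_one_of_mem_range (w.normalized l.1 l.2 hl) hφl)
  rw [hgw] at hg ⊢
  refine mul_mem hb (prodList_mem_of_range_of_conj_mem hφ _ w.chain_ne hred u hu ?_)
  convert mul_mem (mul_mem (inv_mem hb) hg) hb using 1
  group

theorem mem_of_range_of_commute (hφ : ∀ i, Injective (φ i)) {i : ι} {u : G i}
    (hu : ∀ x, x * u * x⁻¹ ∉ (φ i).range) {g : PushoutI φ} (hg : Commute g (of i u)) :
    g ∈ (of (φ := φ) i).range :=
  mem_of_range_of_conj_mem hφ hu (by rw [hg.eq, mul_inv_cancel_right]; exact ⟨u, rfl⟩)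

end Monoid.PushoutI

section ConjugatePower

variable {K : Type*} [Group K] {a c : K} {r : ℤ}

theorem pow_mul_zpow_mul_inv_pow (h : c * a * c⁻¹ = a ^ r) (k : ℤ) (n : ℕ) :
    c ^ n * a ^ k * (c ^ n)⁻¹ = a ^ (k * r ^ n) := by
  induction n generalizing k with
  | zero => simp
  | succ n ih =>
    calc c ^ (n + 1) * a ^ k * (c ^ (n + 1))⁻¹
        = c * (c ^ n * a ^ k * (c ^ n)⁻¹) * c⁻¹ := by group
      _ = (c * a * c⁻¹) ^ (k * r ^ n) := by rw [ih, conj_zpow]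
      _ = a ^ (k * r ^ (n + 1)) := by rw [h, ← zpow_mul, pow_succ]; ring_nf

theorem exists_eq_inv_pow_mul_zpow_mul_pow (h : c * a * c⁻¹ = a ^ r) {g : K}
    (hg : g ∈ Subgroup.closure {a, c}) :
    ∃ (i j : ℕ) (k : ℤ), g = (c ^ i)⁻¹ * a ^ k * c ^ j := by
  induction hg using Subgroup.closure_induction_left with
  | one => exact ⟨0, 0, 0, by simp⟩
  | mul_left x hx y _ ih =>
    obtain ⟨i, j, k, rfl⟩ := ih
    rcases hx with rfl | rfl
    · refine ⟨i, j, r ^ i + k, ?_⟩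
      rw [zpow_add, ← one_mul (r ^ i), ← pow_mul_zpow_mul_inv_pow h 1 i]
      group
    · rcases i with _ | i
      · refine ⟨0, j + 1, k * r, ?_⟩
        rw [← pow_one r, ← pow_mul_zpow_mul_inv_pow h k 1]
        group
      · exact ⟨i, j, k, by group⟩
  | inv_mul_cancel x hx y _ ih =>
    obtain ⟨i, j, k, rfl⟩ := ih
    rcases hx with rfl | rfl
    · refine ⟨i, j, -r ^ i + k, ?_⟩
      rw [zpow_add, ← neg_one_mul, ← pow_mul_zpow_mul_inv_pow h (-1) i]
      group
    · exact ⟨i + 1, j, k, by group⟩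

theorem mem_zpowers_of_mem_closure_of_commute (h : c * a * c⁻¹ = a ^ r) (hr : r ≠ 1)
    (ha : Injective fun n : ℤ => a ^ n) {g : K} (hg : g ∈ Subgroup.closure {a, c})
    (hgc : Commute g c) : g ∈ Subgroup.zpowers c := by
  obtain ⟨i, j, k, rfl⟩ := exists_eq_inv_pow_mul_zpow_mul_pow h hg
  have hak : Commute (a ^ k) c := by
    have hc : Commute c c := .refl c
    rw [show a ^ k = c ^ i * ((c ^ i)⁻¹ * a ^ k * c ^ j) * (c ^ j)⁻¹ by group]
    exact ((hc.pow_left i).mul_left hgc).mul_left (hc.pow_left j).inv_left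
  have hk : k * r = k := ha <| by
    dsimp only
    rw [← pow_one r, ← pow_mul_zpow_mul_inv_pow h k 1, pow_one, ← hak.eq, mul_inv_cancel_right]
  obtain rfl : k = 0 := by
    by_contra hk0
    exact hr ((mul_eq_left₀ hk0).1 hk)
  simpa using Subgroup.mul_mem _ (Subgroup.inv_mem _ (Subgroup.npow_mem_zpowers c i))
    (Subgroup.npow_mem_zpowers c j)

end ConjugatePower

namespace GBS

open Monoid PushoutI

variable {p q : ℕ}

def stableGen : Bool → Gen
  | false => .s
  | true => .t

theorem of_stable_mul_of_a_mul_inv (i : Bool) :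
    (PresentedGroup.of (stableGen i) : PresentedGroup (gbsRels p q)) *
      PresentedGroup.of Gen.a * (PresentedGroup.of (stableGen i))⁻¹ =
      PresentedGroup.of Gen.a ^ (cond i q p) := by
  rw [← mul_inv_eq_one]
  cases i
  · exact PresentedGroup.one_of_mem (Or.inl rfl)
  · exact PresentedGroup.one_of_mem (Or.inr rfl)

variable (p q) in
def expSum : PresentedGroup (gbsRels p q) →* Multiplicative ℤ :=
  PresentedGroup.toGroup (f := fun | .a => 1 | .s => .ofAdd 1 | .t => .ofAdd 1) <| by
    rintro _ (rfl | rfl) <;> simp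

def affineAction (hp : p ≠ 0) (hq : q ≠ 0) : PresentedGroup (gbsRels p q) →* Equiv.Perm ℚ :=
  PresentedGroup.toGroup (f := fun
    | .a => Equiv.addLeft 1
    | .s => Equiv.mulLeft₀ (p : ℚ) (Nat.cast_ne_zero.2 hp)
    | .t => Equiv.mulLeft₀ (q : ℚ) (Nat.cast_ne_zero.2 hq)) <| by
    rintro _ (rfl | rfl) <;> ext x <;> simp [field]

theorem injective_zpow_of_a (hp : p ≠ 0) (hq : q ≠ 0) :
    Injective fun n : ℤ => (PresentedGroup.of Gen.a : PresentedGroup (gbsRels p q)) ^ n := by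
  intro m n hmn
  simpa [affineAction, PresentedGroup.toGroup.of] using
    congrArg (fun g => affineAction hp hq g 0) hmn

variable (p q) in
def factor (i : Bool) : Subgroup (PresentedGroup (gbsRels p q)) :=
  Subgroup.closure {PresentedGroup.of Gen.a, PresentedGroup.of (stableGen i)}

def factorA {i : Bool} : factor p q i := ⟨_, Subgroup.subset_closure (Or.inl rfl)⟩

def factorStable {i : Bool} : factor p q i := ⟨_, Subgroup.subset_closure (Or.inr rfl)⟩

variable (p q) in
def amalgamMap (i : Bool) : Multiplicative ℤ →* factor p q i := zpowersHom _ factorA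

abbrev Amalgam (p q : ℕ) := PushoutI (amalgamMap p q)

theorem amalgamMap_apply (i : Bool) (n : Multiplicative ℤ) :
    (amalgamMap p q i n : PresentedGroup (gbsRels p q)) =
      PresentedGroup.of Gen.a ^ n.toAdd := by
  simp [amalgamMap, factorA]

theorem of_factorStable_mul_base_mul_inv (i : Bool) :
    of i factorStable * base (amalgamMap p q) (.ofAdd 1) * (of i factorStable)⁻¹ =
      base (amalgamMap p q) (.ofAdd 1) ^ cond i q p := by
  rw [← of_apply_eq_base _ i, ← map_inv, ← map_mul, ← map_mul, ← map_pow]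
  congr 1
  ext
  simpa [amalgamMap_apply, factorStable] using of_stable_mul_of_a_mul_inv i

variable (p q) in
def toAmalgam : PresentedGroup (gbsRels p q) →* Amalgam p q :=
  PresentedGroup.toGroup (f := fun
    | .a => base _ (.ofAdd 1)
    | .s => of false factorStable
    | .t => of true factorStable) <| by
    rintro _ (rfl | rfl)
    · simpa [mul_inv_eq_one] using of_factorStable_mul_base_mul_inv (p := p) (q := q) false
    · simpa [mul_inv_eq_one] using of_factorStable_mul_base_mul_inv (p := p) (q := q) true

variable (p q) in
def ofAmalgam : Amalgam p q →* PresentedGroup (gbsRels p q) :=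
  PushoutI.lift (fun i => (factor p q i).subtype) (zpowersHom _ (PresentedGroup.of Gen.a)) <| by
    intro i
    ext
    simp [amalgamMap_apply]

theorem ofAmalgam_toAmalgam (g : PresentedGroup (gbsRels p q)) :
    ofAmalgam p q (toAmalgam p q g) = g := by
  suffices (ofAmalgam p q).comp (toAmalgam p q) = .id _ from DFunLike.congr_fun this g
  ext (_ | _ | _) <;>
    simp [toAmalgam, ofAmalgam, PresentedGroup.toGroup.of, factorStable, stableGen]

theorem toAmalgam_of_stable (i : Bool) :
    toAmalgam p q (PresentedGroup.of (stableGen i)) = of i factorStable := by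
  cases i <;> exact PresentedGroup.toGroup.of _

theorem amalgamMap_injective (hp : p ≠ 0) (hq : q ≠ 0) (i : Bool) :
    Injective (amalgamMap p q i) := fun m n h =>
  Multiplicative.toAdd.injective <| injective_zpow_of_a hp hq <| by
    simpa [amalgamMap_apply] using congrArg Subtype.val h

theorem conj_factorStable_notMem_range (i : Bool) (x : factor p q i) :
    x * factorStable * x⁻¹ ∉ (amalgamMap p q i).range := by
  rintro ⟨n, hn⟩
  have := congrArg (expSum p q ∘ Subtype.val) hn.symm
  cases i <;>
    simp [amalgamMap_apply, expSum, PresentedGroup.toGroup.of, factorStable, stableGen] at this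

theorem centralizer_of_stable (hp : 1 < p) (hq : 1 < q) (i : Bool) :
    Subgroup.centralizer {(PresentedGroup.of (stableGen i) : PresentedGroup (gbsRels p q))} =
      Subgroup.zpowers (PresentedGroup.of (stableGen i)) := by
  refine le_antisymm (fun g hg => ?_)
    (Subgroup.zpowers_le.2 (Subgroup.mem_centralizer_singleton_iff.2 rfl))
  have hcomm : Commute g (PresentedGroup.of (stableGen i)) :=
    Subgroup.mem_centralizer_singleton_iff.1 hg
  obtain ⟨y, hy⟩ := mem_of_range_of_commute (amalgamMap_injective (p := p) (q := q) (by omega)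
    (by omega)) (conj_factorStable_notMem_range i)
    (by simpa [toAmalgam_of_stable] using hcomm.map (toAmalgam p q))
  have hgy : g = y := by
    rw [← ofAmalgam_toAmalgam g, ← hy]
    simp [ofAmalgam]
  refine mem_zpowers_of_mem_closure_of_commute (r := (cond i q p : ℕ))
    (by rw [zpow_natCast]; exact of_stable_mul_of_a_mul_inv i) (by cases i <;> simp <;> omega)
    (injective_zpow_of_a (by omega) (by omega)) (hgy ▸ y.2) hcomm

end GBS

theorem centralizer_s_and_t_general (p q : ℕ) (hp : p.Prime) (hq : q.Prime) :
    Subgroup.centralizer {(PresentedGroup.of Gen.s : PresentedGroup (gbsRels p q))} =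
      Subgroup.zpowers (PresentedGroup.of Gen.s : PresentedGroup (gbsRels p q)) ∧
    Subgroup.centralizer {(PresentedGroup.of Gen.t : PresentedGroup (gbsRels p q))} =
      Subgroup.zpowers (PresentedGroup.of Gen.t : PresentedGroup (gbsRels p q)) :=
  ⟨GBS.centralizer_of_stable hp.one_lt hq.one_lt false,
    GBS.centralizer_of_stable hp.one_lt hq.one_lt true⟩

theorem centralizer_s_and_t (p q : ℕ) (hp : p.Prime) (hq : q.Prime) (hpq : p ≠ q) :
    Subgroup.centralizer {(PresentedGroup.of Gen.s : PresentedGroup (gbsRels p q))} =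
      Subgroup.zpowers (PresentedGroup.of Gen.s : PresentedGroup (gbsRels p q)) ∧
    Subgroup.centralizer {(PresentedGroup.of Gen.t : PresentedGroup (gbsRels p q))} =
      Subgroup.zpowers (PresentedGroup.of Gen.t : PresentedGroup (gbsRels p q)) :=
  centralizer_s_and_t_general p q hp hq
end

section
/- Let A(P₃) = ⟨a, b, c | ab = ba, bc = cb⟩. Then the intersection of the three subgroups ⟨ab, c⟩, ⟨a, bc⟩ and ⟨a, c⟩ equals the commutator subgroup [⟨a, c⟩, ⟨a, c⟩] of the subgroup ⟨a, c⟩: ⟨ab, c⟩ ∩ ⟨a, bc⟩ ∩ ⟨a, c⟩ = [⟨a, c⟩, ⟨a, c⟩]. -/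
/-!
The generator `b` is central. The endomorphisms `a ↦ ab` and `c ↦ bc` (fixing the other
generators) agree with the identity on `⟨a, c⟩` modulo the centre, so they fix every commutator
of `⟨a, c⟩`; hence `[⟨a, c⟩, ⟨a, c⟩]` lies in their images `⟨ab, c⟩` and `⟨a, bc⟩`.

Conversely, writing `α, β, γ` for the exponent sums of `a, b, c`, we have `α = β` on `⟨ab, c⟩`,
`β = γ` on `⟨a, bc⟩` and `β = 0` on `⟨a, c⟩`. So an element of the triple intersection has
`α = γ = 0`; since `α` and `γ` separate the images of `a` and `c` in the abelianization of
`⟨a, c⟩`, such an element is trivial there, i.e. lies in `[⟨a, c⟩, ⟨a, c⟩]`.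
-/

/-- Generators of `A(P₃) = ⟨a, b, c | ab = ba, bc = cb⟩`. -/
inductive GenA
  | a | b | c

open scoped commutatorElement in
/-- Relators of `A(P₃) = ⟨a, b, c | ab = ba, bc = cb⟩`. -/
def relsA : Set (FreeGroup GenA) :=
  { ⁅FreeGroup.of GenA.a, FreeGroup.of GenA.b⁆,
    ⁅FreeGroup.of GenA.b, FreeGroup.of GenA.c⁆ }

open Subgroup

open scoped commutatorElement

section Commutator

variable {G : Type*} [Group G]

theorem commutatorElement_mul_mul_of_mem_center (x y : G) {z w : G} (hz : z ∈ center G)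
    (hw : w ∈ center G) : ⁅x * z, y * w⁆ = ⁅x, y⁆ :=
  calc ⁅x * z, y * w⁆ = x * (z * (y * w)) * z⁻¹ * x⁻¹ * w⁻¹ * y⁻¹ := by group
    _ = x * y * (w * x⁻¹) * w⁻¹ * y⁻¹ := by rw [← mem_center_iff.mp hz]; group
    _ = ⁅x, y⁆ := by rw [← mem_center_iff.mp hw]; group

theorem commutator_closure_le_closure_image {S : Set G} (φ : G →* G)
    (hφ : ∀ s ∈ S, s⁻¹ * φ s ∈ center G) :
    ⁅closure S, closure S⁆ ≤ closure (φ '' S) := by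
  have hmk : Set.EqOn (QuotientGroup.mk' (center G)) ((QuotientGroup.mk' (center G)).comp φ)
      (closure S) :=
    MonoidHom.eqOn_closure fun s hs => QuotientGroup.eq.mpr (hφ s hs)
  have hcentral (p : G) (hp : p ∈ closure S) : ∃ z ∈ center G, φ p = p * z :=
    ⟨p⁻¹ * φ p, QuotientGroup.eq.mp (hmk hp), (mul_inv_cancel_left p (φ p)).symm⟩
  rw [commutator_le]
  intro p hp q hq
  obtain ⟨z, hz, hpz⟩ := hcentral p hp
  obtain ⟨w, hw, hqw⟩ := hcentral q hq
  have hfix : φ ⁅p, q⁆ = ⁅p, q⁆ := by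
    rw [map_commutatorElement, hpz, hqw, commutatorElement_mul_mul_of_mem_center _ _ hz hw]
  rw [← hfix, ← MonoidHom.map_closure]
  exact mem_map_of_mem φ (commutator_le_self _ (commutator_mem_commutator hp hq))

theorem exists_zpow_mul_zpow_mul_mem_commutator {x y h : G} (hh : h ∈ closure {x, y}) :
    ∃ m n : ℤ, ∃ k ∈ ⁅closure {x, y}, closure {x, y}⁆, h = x ^ m * y ^ n * k := by
  set H := closure ({x, y} : Set G)
  let x' : H := ⟨x, subset_closure (by simp)⟩
  let y' : H := ⟨y, subset_closure (by simp)⟩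
  have hgen : closure ({x', y'} : Set H) = ⊤ := by
    convert closure_closure_coe_preimage (k := ({x, y} : Set G)) using 2
    ext; simp [x', y', Subtype.ext_iff]
  have habel : Abelianization.of ⟨h, hh⟩ ∈ closure {Abelianization.of x', Abelianization.of y'} := by
    rw [← Set.image_pair, ← MonoidHom.map_closure, hgen]
    exact mem_map_of_mem _ (mem_top _)
  obtain ⟨m, n, hmn⟩ := mem_closure_pair.mp habel
  refine ⟨m, n, ((x' ^ m * y' ^ n)⁻¹ * ⟨h, hh⟩ : H), ?_, by simp [x', y', mul_assoc]⟩
  rw [← map_subtype_commutator]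
  refine ⟨(x' ^ m * y' ^ n)⁻¹ * ⟨h, hh⟩, ?_, rfl⟩
  rw [← Abelianization.ker_of]
  exact MonoidHom.mem_ker.mpr (by simp [← hmn])

theorem closure_pair_inf_ker_le_commutator {M : Type*} [CommGroup M] (F : G →* M) {x y : G}
    (hF : ∀ m n : ℤ, F x ^ m * F y ^ n = 1 → m = 0 ∧ n = 0) :
    closure {x, y} ⊓ F.ker ≤ ⁅closure {x, y}, closure {x, y}⁆ := by
  rintro h ⟨hh, hFh⟩
  obtain ⟨m, n, k, hk, rfl⟩ := exists_zpow_mul_zpow_mul_mem_commutator hh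
  have hFk : F k = 1 :=
    Abelianization.commutator_subset_ker F (commutator_mono le_top le_top hk)
  obtain ⟨rfl, rfl⟩ := hF m n (by simpa [hFk] using hFh)
  simpa using hk

end Commutator

abbrev AP3 := PresentedGroup relsA

namespace AP3

abbrev a : AP3 := PresentedGroup.of GenA.a
abbrev b : AP3 := PresentedGroup.of GenA.b
abbrev c : AP3 := PresentedGroup.of GenA.c

theorem commute_a_b : Commute a b :=
  commutatorElement_eq_one_iff_commute.mp <|
    (map_commutatorElement (PresentedGroup.mk relsA) _ _).symm.trans
      (PresentedGroup.one_of_mem (Or.inl rfl))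

theorem commute_b_c : Commute b c :=
  commutatorElement_eq_one_iff_commute.mp <|
    (map_commutatorElement (PresentedGroup.mk relsA) _ _).symm.trans
      (PresentedGroup.one_of_mem (Or.inr rfl))

theorem b_mem_center : b ∈ center AP3 := by
  rw [← SetLike.mem_coe, ← Set.singleton_subset_iff, ← centralizer_eq_top_iff_subset, eq_top_iff,
    ← PresentedGroup.closure_range_of, closure_le]
  rintro _ ⟨_ | _ | _, rfl⟩ <;> rw [SetLike.mem_coe, mem_centralizer_singleton_iff]
  exacts [commute_a_b.eq, commute_b_c.symm.eq]

section Lift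

variable {G : Type*} [Group G]

def lift (x y z : G) (hxy : Commute x y) (hyz : Commute y z) : AP3 →* G :=
  PresentedGroup.toGroup (f := fun | .a => x | .b => y | .c => z) <| by
    rintro r (rfl | rfl) <;> simpa [map_commutatorElement, commutatorElement_eq_one_iff_commute]

variable (x y z : G) (hxy : Commute x y) (hyz : Commute y z)

@[simp] theorem lift_a : lift x y z hxy hyz a = x := PresentedGroup.toGroup.of _
@[simp] theorem lift_b : lift x y z hxy hyz b = y := PresentedGroup.toGroup.of _
@[simp] theorem lift_c : lift x y z hxy hyz c = z := PresentedGroup.toGroup.of _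

end Lift

/-- The weighted exponent sum `iα + jβ + kγ`. -/
def weight (i j k : ℤ) : AP3 →* Multiplicative ℤ :=
  lift (.ofAdd i) (.ofAdd j) (.ofAdd k) (Commute.all _ _) (Commute.all _ _)

@[simp] theorem weight_a (i j k : ℤ) : weight i j k a = .ofAdd i := lift_a ..
@[simp] theorem weight_b (i j k : ℤ) : weight i j k b = .ofAdd j := lift_b ..
@[simp] theorem weight_c (i j k : ℤ) : weight i j k c = .ofAdd k := lift_c ..

theorem weight_add (i j k i' j' k' : ℤ) (g : AP3) :
    weight (i + i') (j + j') (k + k') g = weight i j k g * weight i' j' k' g := by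
  rw [← MonoidHom.mul_apply]
  congr 1
  exact PresentedGroup.ext <| by rintro (_ | _ | _) <;> simp [ofAdd_add]

theorem commutator_le_closure_ab_c : ⁅closure {a, c}, closure {a, c}⁆ ≤ closure {a * b, c} := by
  have := commutator_closure_le_closure_image (S := {a, c})
    (lift (a * b) b c (commute_a_b.mul_left (.refl b)) commute_b_c)
    (by rintro _ (rfl | rfl) <;> simp [b_mem_center])
  rwa [Set.image_pair, lift_a, lift_c] at this

theorem commutator_le_closure_a_bc : ⁅closure {a, c}, closure {a, c}⁆ ≤ closure {a, b * c} := by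
  have := commutator_closure_le_closure_image (S := {a, c})
    (lift a b (c * b) commute_a_b (commute_b_c.mul_right (.refl b)))
    (by rintro _ (rfl | rfl) <;> simp [b_mem_center])
  rwa [Set.image_pair, lift_a, lift_c, ← commute_b_c.eq] at this

theorem weight_eq_one_of_mem_closure_pair {i j k : ℤ} {x y g : AP3} (hx : weight i j k x = 1)
    (hy : weight i j k y = 1) (hg : g ∈ closure {x, y}) : weight i j k g = 1 :=
  (closure_le (weight i j k).ker).mpr (by rintro _ (rfl | rfl) <;> assumption) hg

theorem inf_le_commutator :
    closure {a * b, c} ⊓ closure {a, b * c} ⊓ closure {a, c} ≤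
      ⁅closure {a, c}, closure {a, c}⁆ := by
  rintro g ⟨⟨hg₁, hg₂⟩, hg₃⟩
  have h₁ : weight 1 (-1) 0 g = 1 := weight_eq_one_of_mem_closure_pair (by simp) (by simp) hg₁
  have h₂ : weight 0 (-1) 1 g = 1 := weight_eq_one_of_mem_closure_pair (by simp) (by simp) hg₂
  have h₃ : weight 0 1 0 g = 1 := weight_eq_one_of_mem_closure_pair (by simp) (by simp) hg₃
  have hα : weight 1 0 0 g = 1 := by simpa [h₁, h₃] using weight_add 1 (-1) 0 0 1 0 g
  have hγ : weight 0 0 1 g = 1 := by simpa [h₂, h₃] using weight_add 0 (-1) 1 0 1 0 g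
  refine closure_pair_inf_ker_le_commutator ((weight 1 0 0).prod (weight 0 0 1)) ?_ ⟨hg₃, ?_⟩
  · simp
  · simp [hα, hγ]

end AP3

open AP3

/-- In `A(P₃)`: `⟨ab, c⟩ ∩ ⟨a, bc⟩ ∩ ⟨a, c⟩ = [⟨a, c⟩, ⟨a, c⟩]`. -/
theorem triple_intersection_eq_commutator :
    Subgroup.closure
        {PresentedGroup.of GenA.a * PresentedGroup.of GenA.b,
          (PresentedGroup.of GenA.c : PresentedGroup relsA)} ⊓
      Subgroup.closure
        {PresentedGroup.of GenA.a,
          PresentedGroup.of GenA.b * PresentedGroup.of GenA.c} ⊓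
      Subgroup.closure
        {PresentedGroup.of GenA.a, PresentedGroup.of GenA.c} =
      ⁅Subgroup.closure
          {PresentedGroup.of GenA.a, (PresentedGroup.of GenA.c : PresentedGroup relsA)},
        Subgroup.closure
          {PresentedGroup.of GenA.a, (PresentedGroup.of GenA.c : PresentedGroup relsA)}⁆ :=
  le_antisymm inf_le_commutator <|
    le_inf (le_inf commutator_le_closure_ab_c commutator_le_closure_a_bc) (commutator_le_self _)
end
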